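/- The set Z of trivalent trees in (X_2, d_2) has infinite Hausdorff dimension: dim_H(Z) = ∞. -/

import Mathlib

open Filter
open scoped ENNReal

noncomputable section

namespace GraphTrees

/-- The word length of an element of a free group: the length of its reduced word. -/
def wlen {n : ℕ} (g : FreeGroup (Fin n)) : ℕ := (FreeGroup.toWord g).length

/-- `h` is a prefix of `g`. -/
def IsPref {n : ℕ} (h g : FreeGroup (Fin n)) : Prop :=
  wlen h + wlen (h⁻¹ * g) = wlen g

/-- Vertex sets of infinite connected subtrees of the Cayley graph of the free group on
`n` generators which contain the identity: subsets containing `1`, infinite, and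
prefix-closed. -/
def IsTree {n : ℕ} (S : Set (FreeGroup (Fin n))) : Prop :=
  1 ∈ S ∧ S.Infinite ∧ ∀ g ∈ S, ∀ h : FreeGroup (Fin n), IsPref h g → h ∈ S

/-- The space `X n` of pointed trees. -/
def X (n : ℕ) : Type := {S : Set (FreeGroup (Fin n)) // IsTree S}

variable {n : ℕ}

/-- The pattern `B_S(m)` of radius `m` of a pointed tree. -/
def ball (S : X n) (m : ℕ) : Set (FreeGroup (Fin n)) := {g ∈ S.1 | wlen g ≤ m}

/-- The set of radii on which two pointed trees have the same pattern. -/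
def agreeSet (S S' : X n) : Set ℕ := {m | ball S m = ball S' m}

/-- The ball metric on the space of pointed trees. -/
def tdist (S S' : X n) : ℝ :=
  letI := Classical.propDecidable (S = S')
  if S = S' then 0 else Real.exp (-((sSup (agreeSet S S') : ℕ) : ℝ))

theorem tdist_eq_of_ne {x y : X n} (h : x ≠ y) :
    tdist x y = Real.exp (-((sSup (agreeSet x y) : ℕ) : ℝ)) := by
  unfold tdist
  rw [if_neg h]

theorem ball_mono_eq {x y : X n} {k m : ℕ} (hkm : k ≤ m)
    (h : ball x m = ball y m) : ball x k = ball y k := by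
  ext g
  constructor
  · rintro ⟨hg, hlen⟩
    have hx : g ∈ ball x m := ⟨hg, hlen.trans hkm⟩
    rw [h] at hx
    exact ⟨hx.1, hlen⟩
  · rintro ⟨hg, hlen⟩
    have hy : g ∈ ball y m := ⟨hg, hlen.trans hkm⟩
    rw [← h] at hy
    exact ⟨hy.1, hlen⟩

theorem eq_of_agree_all {x y : X n} (h : ∀ m, ball x m = ball y m) : x = y := by
  apply Subtype.ext
  ext g
  constructor
  · intro hg
    have hx : g ∈ ball x (wlen g) := ⟨hg, le_rfl⟩
    rw [h] at hx
    exact hx.1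
  · intro hg
    have hy : g ∈ ball y (wlen g) := ⟨hg, le_rfl⟩
    rw [← h] at hy
    exact hy.1

theorem bddAbove_agreeSet {x y : X n} (h : x ≠ y) : BddAbove (agreeSet x y) := by
  by_contra hb
  refine h (eq_of_agree_all fun m => ?_)
  rcases not_bddAbove_iff.mp hb m with ⟨k, hk, hmk⟩
  exact ball_mono_eq hmk.le hk

theorem ball_zero (x : X n) : ball x 0 = {1} := by
  ext g
  simp only [ball, Set.mem_setOf_eq, Nat.le_zero, Set.mem_singleton_iff]
  constructor
  · rintro ⟨hg, hlen⟩
    exact FreeGroup.toWord_eq_nil_iff.mp (List.length_eq_zero_iff.mp hlen)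
  · rintro rfl
    exact ⟨x.2.1, by simp [wlen]⟩

theorem zero_mem_agreeSet (x y : X n) : (0 : ℕ) ∈ agreeSet x y := by
  show ball x 0 = ball y 0
  rw [ball_zero, ball_zero]

theorem tdist_nonneg (x y : X n) : 0 ≤ tdist x y := by
  rcases eq_or_ne x y with rfl | h
  · unfold tdist
    rw [if_pos rfl]
  · rw [tdist_eq_of_ne h]
    exact (Real.exp_pos _).le

theorem tdist_self (x : X n) : tdist x x = 0 := by
  unfold tdist
  rw [if_pos rfl]

theorem tdist_comm (x y : X n) : tdist x y = tdist y x := by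
  by_cases h : x = y
  · subst h; rfl
  · have hs : agreeSet x y = agreeSet y x := by
      ext m
      exact eq_comm
    rw [tdist_eq_of_ne h, tdist_eq_of_ne (Ne.symm h), hs]

theorem tdist_ultra (x y z : X n) : tdist x z ≤ max (tdist x y) (tdist y z) := by
  rcases eq_or_ne x z with rfl | hxz
  · exact le_max_of_le_left (by rw [tdist_self]; exact tdist_nonneg x y)
  rcases eq_or_ne x y with rfl | hxy
  · exact le_max_of_le_right le_rfl
  rcases eq_or_ne y z with rfl | hyz
  · exact le_max_of_le_left le_rfl
  have hbxy := bddAbove_agreeSet hxy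
  have hbyz := bddAbove_agreeSet hyz
  have hbxz := bddAbove_agreeSet hxz
  have hma : sSup (agreeSet x y) ∈ agreeSet x y :=
    Nat.sSup_mem ⟨0, zero_mem_agreeSet x y⟩ hbxy
  have hmb : sSup (agreeSet y z) ∈ agreeSet y z :=
    Nat.sSup_mem ⟨0, zero_mem_agreeSet y z⟩ hbyz
  have hmin : min (sSup (agreeSet x y)) (sSup (agreeSet y z)) ∈ agreeSet x z := by
    have h1 : ball x (min (sSup (agreeSet x y)) (sSup (agreeSet y z)))
        = ball y (min (sSup (agreeSet x y)) (sSup (agreeSet y z))) :=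
      ball_mono_eq (min_le_left _ _) hma
    have h2 : ball y (min (sSup (agreeSet x y)) (sSup (agreeSet y z)))
        = ball z (min (sSup (agreeSet x y)) (sSup (agreeSet y z))) :=
      ball_mono_eq (min_le_right _ _) hmb
    exact h1.trans h2
  have hle : min (sSup (agreeSet x y)) (sSup (agreeSet y z)) ≤ sSup (agreeSet x z) :=
    le_csSup hbxz hmin
  rw [tdist_eq_of_ne hxz, tdist_eq_of_ne hxy, tdist_eq_of_ne hyz]
  rcases le_total (sSup (agreeSet x y)) (sSup (agreeSet y z)) with hab | hab
  · refine le_max_of_le_left (Real.exp_le_exp.mpr ?_)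
    have h2 : ((sSup (agreeSet x y) : ℕ) : ℝ) ≤ ((sSup (agreeSet x z) : ℕ) : ℝ) := by
      exact_mod_cast (min_eq_left hab) ▸ hle
    linarith
  · refine le_max_of_le_right (Real.exp_le_exp.mpr ?_)
    have h2 : ((sSup (agreeSet y z) : ℕ) : ℝ) ≤ ((sSup (agreeSet x z) : ℕ) : ℝ) := by
      exact_mod_cast (min_eq_right hab) ▸ hle
    linarith

theorem tdist_triangle (x y z : X n) : tdist x z ≤ tdist x y + tdist y z :=
  (tdist_ultra x y z).trans
    (max_le (le_add_of_nonneg_right (tdist_nonneg y z))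
      (le_add_of_nonneg_left (tdist_nonneg x y)))

instance : MetricSpace (X n) where
  dist := tdist
  dist_self := tdist_self
  dist_comm := tdist_comm
  dist_triangle := tdist_triangle
  eq_of_dist_eq_zero := by
    intro x y h
    by_contra hne
    have h' : tdist x y = 0 := h
    rw [tdist_eq_of_ne hne] at h'
    exact (Real.exp_pos _).ne' h'

theorem dist_eq_tdist (x y : X n) : dist x y = tdist x y := rfl

/-- The translate `S · g` of a tree `S` by a vertex `g ∈ S`. -/
def translate {n : ℕ} (S : Set (FreeGroup (Fin n))) (g : FreeGroup (Fin n)) :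
    Set (FreeGroup (Fin n)) := (fun h => g⁻¹ * h) '' S

/-- The orbit `O(S) = {S · g : g ∈ S}` of a pointed tree under the pseudogroup action. -/
def orbit (S : X n) : Set (X n) := {S' | ∃ g ∈ S.1, S'.1 = translate S.1 g}

/-- A subset `Y ⊆ X n` is invariant under the pseudogroup action. -/
def Invariant (Y : Set (X n)) : Prop :=
  ∀ S ∈ Y, ∀ g ∈ S.1, ∀ S' : X n, S'.1 = translate S.1 g → S' ∈ Y

/-- `Λ(Z, m)`: the number of distinct patterns of radius `m` of trees in `Z`. -/
def Lam (Z : Set (X n)) (m : ℕ) : ℕ := ((fun S => ball S m) '' Z).ncard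

/-- The lower box dimension of a subset of the space of pointed trees. -/
def lowerBox (Z : Set (X n)) : ℝ≥0∞ :=
  Filter.liminf (fun m : ℕ => ENNReal.ofReal (Real.log (Lam Z m)) / (m : ℝ≥0∞)) Filter.atTop

/-- The upper box dimension of a subset of the space of pointed trees. -/
def upperBox (Z : Set (X n)) : ℝ≥0∞ :=
  Filter.limsup (fun m : ℕ => ENNReal.ofReal (Real.log (Lam Z m)) / (m : ℝ≥0∞)) Filter.atTop


/-- The set of trivalent trees in `X 2`: every vertex has exactly three neighbours. -/
def Ztri : Set (X 2) :=
  {S | ∀ g ∈ S.1, ({h ∈ S.1 | wlen (g⁻¹ * h) = 1} : Set (FreeGroup (Fin 2))).encard = 3}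

end GraphTrees

/-!
For a digit sequence `d : ℕ → Fin 2` we build a trivalent tree `codeTree d` in which, writing
`(k, m) = Nat.unpair j`, the vertex `b^k a^(m+1)` continues by `b` if `d j = 1` and by `b⁻¹`
otherwise; away from this comb every branch keeps the sign of its letters. The vertex
`b^k a^(m+1) b` carrying the `j`-th digit has length `O(√j)`, so a ball of radius `r` determines
the first `(r/2)^2` digits of any tree of `Z`. Hence the map sending a tree to the binary number
`0.d₀d₁d₂…` of the digits it carries is Hölder of every exponent `N` on `Z`; as its image contains
`[0, 1]`, `dim_H Z ≥ N` for every `N`.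
-/

open scoped NNReal

theorem HolderWith.of_dist_le {X Y : Type*} [PseudoMetricSpace X] [PseudoMetricSpace Y]
    {C r : ℝ≥0} {f : X → Y} (h : ∀ x y, dist (f x) (f y) ≤ C * dist x y ^ (r : ℝ)) :
    HolderWith C r f := fun x y => by
  rw [edist_dist, edist_dist, ENNReal.ofReal_rpow_of_nonneg dist_nonneg r.coe_nonneg,
    ← ENNReal.ofReal_coe_nnreal, ← ENNReal.ofReal_mul C.coe_nonneg]
  exact ENNReal.ofReal_le_ofReal (h x y)

theorem dimH_eq_top_of_forall_holderOnWith {X Y : Type*} [EMetricSpace X] [EMetricSpace Y]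
    {f : X → Y} {s : Set X} {t : Set Y} (hf : ∀ N : ℕ, ∃ C, HolderOnWith C N f s)
    (ht : t ⊆ f '' s) (ht0 : dimH t ≠ 0) : dimH s = ⊤ := by
  have hmul : ∀ N : ℕ, dimH t * N ≤ dimH s := by
    intro N
    rcases N.eq_zero_or_pos with rfl | hN
    · simp
    obtain ⟨C, hC⟩ := hf N
    have hN' : (0 : ℝ≥0) < N := by exact_mod_cast hN
    rw [← ENNReal.le_div_iff_mul_le (Or.inl (by simpa using hN.ne')) (Or.inl (by simp))]
    exact (dimH_mono ht).trans (by simpa using hC.dimH_image_le hN')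
  refine top_le_iff.1 ?_
  calc ⊤ = dimH t * ⨆ N : ℕ, (N : ℝ≥0∞) := by rw [ENNReal.iSup_natCast, ENNReal.mul_top ht0]
    _ = ⨆ N : ℕ, dimH t * N := ENNReal.mul_iSup _ _
    _ ≤ dimH s := iSup_le hmul

namespace FreeGroup

variable {α : Type*}

theorem isReduced_of_forall_snd_eq {L : List (α × Bool)} {b : Bool} (h : ∀ x ∈ L, x.2 = b) :
    IsReduced L :=
  List.Pairwise.isChain <| List.pairwise_of_forall_mem_list fun x hx y hy _ => by
    rw [h x hx, h y hy]

theorem isReduced_append_singleton {L : List (α × Bool)} {x : α × Bool} (hL : IsReduced L)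
    (hx : L.getLast? ≠ some (x.1, !x.2)) : IsReduced (L ++ [x]) := by
  refine List.isChain_append.2 ⟨hL, List.isChain_singleton x, fun y hy z hz hyz => ?_⟩
  obtain rfl : x = z := by simpa using hz
  by_contra hne
  exact hx (Option.mem_def.1 hy ▸ congrArg some (Prod.ext hyz (Bool.eq_not_of_ne hne)))

theorem mk_singleton_mul_mk_singleton_inv (y : α × Bool) : mk [y] * mk [(y.1, !y.2)] = 1 := by
  rw [show mk [(y.1, !y.2)] = (mk [y])⁻¹ by simp [inv_mk, invRev], mul_inv_cancel]

variable [DecidableEq α]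

theorem mk_singleton_injective : Function.Injective fun x : α × Bool => mk [x] := by
  intro x y h
  simpa using congrArg toWord h

theorem toWord_mul_mk_singleton {g : FreeGroup α} {x : α × Bool}
    (hx : g.toWord.getLast? ≠ some (x.1, !x.2)) : (g * mk [x]).toWord = g.toWord ++ [x] := by
  rw [← mk_toWord (x := g), mul_mk, toWord_mk, mk_toWord,
    (isReduced_append_singleton isReduced_toWord hx).reduce_eq]

theorem mul_mk_singleton_inv_last {g : FreeGroup α} {L : List (α × Bool)} {y : α × Bool}
    (hg : g.toWord = L ++ [y]) : g * mk [(y.1, !y.2)] = mk L := by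
  rw [← mk_toWord (x := g), hg, ← mul_mk, mul_assoc, mk_singleton_mul_mk_singleton_inv, mul_one]

end FreeGroup

section RuleTree

variable {α σ : Type*} (next : σ → α × Bool → σ) (forbidden : σ → α × Bool)

def Admits : σ → List (α × Bool) → Prop
  | _, [] => True
  | q, x :: w => x ≠ forbidden q ∧ Admits (next q x) w

variable {next forbidden}

theorem admits_append {q : σ} {w v : List (α × Bool)} :
    Admits next forbidden q (w ++ v) ↔
      Admits next forbidden q w ∧ Admits next forbidden (w.foldl next q) v := by
  induction w generalizing q with
  | nil => simp [Admits]
  | cons x w ih => simp [Admits, ih, and_assoc]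

theorem Admits.of_prefix {q : σ} {w v : List (α × Bool)} (h : Admits next forbidden q w)
    (hvw : v <+: w) : Admits next forbidden q v := by
  obtain ⟨u, rfl⟩ := hvw
  exact (admits_append.1 h).1

theorem admits_replicate {x : α × Bool} (q : ℕ → σ) (hnext : ∀ i, next (q i) x = q (i + 1))
    (hforbidden : ∀ i, x ≠ forbidden (q i)) (n : ℕ) :
    Admits next forbidden (q 0) (List.replicate n x) ∧
      (List.replicate n x).foldl next (q 0) = q n := by
  induction n generalizing q with
  | zero => simp [Admits]
  | succ n ih =>
    obtain ⟨h₁, h₂⟩ := ih (fun i => q (i + 1)) (fun i => hnext _) (fun i => hforbidden _)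
    rw [List.replicate_succ, List.foldl_cons, hnext]
    exact ⟨⟨hforbidden 0, hnext 0 ▸ h₁⟩, h₂⟩

variable (next forbidden) [DecidableEq α]

/-- The subtree of the Cayley graph cut out by an automaton in which every state forbids one
letter. -/
def ruleTree (q₀ : σ) : Set (FreeGroup α) := {g | Admits next forbidden q₀ g.toWord}

variable {next forbidden}

theorem mem_ruleTree_mk {q₀ : σ} {L : List (α × Bool)} (hL : FreeGroup.IsReduced L) :
    FreeGroup.mk L ∈ ruleTree next forbidden q₀ ↔ Admits next forbidden q₀ L := by
  rw [ruleTree, Set.mem_ofPred_eq, FreeGroup.toWord_mk, hL.reduce_eq]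

/-- Since the letter leading back is never forbidden, a vertex misses exactly one neighbour. -/
theorem setOf_mul_mem_ruleTree (hforbidden : ∀ q x, forbidden (next q x) ≠ (x.1, !x.2))
    {q₀ : σ} {g : FreeGroup α} (hg : g ∈ ruleTree next forbidden q₀) :
    {x | g * FreeGroup.mk [x] ∈ ruleTree next forbidden q₀} =
      {forbidden (g.toWord.foldl next q₀)}ᶜ := by
  ext x
  rw [Set.mem_ofPred_eq, Set.mem_compl_singleton_iff]
  by_cases hx : g.toWord.getLast? = some (x.1, !x.2)
  · obtain ⟨L, hL⟩ := List.getLast?_eq_some_iff.1 hx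
    have hparent : g * FreeGroup.mk [x] = FreeGroup.mk L := by
      simpa using FreeGroup.mul_mk_singleton_inv_last hL
    have hLred : FreeGroup.IsReduced L :=
      FreeGroup.isReduced_toWord.infix (hL ▸ List.prefix_append L _).isInfix
    have hxne : x ≠ forbidden (g.toWord.foldl next q₀) := by
      rw [hL, List.foldl_append, List.foldl_cons, List.foldl_nil]
      simpa using (hforbidden (L.foldl next q₀) (x.1, !x.2)).symm
    rw [hparent, mem_ruleTree_mk hLred]
    exact iff_of_true ((hg : Admits next forbidden q₀ g.toWord).of_prefix
      (hL ▸ List.prefix_append L _)) hxne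
  · rw [ruleTree, Set.mem_ofPred_eq, FreeGroup.toWord_mul_mk_singleton hx, admits_append]
    simp [Admits, show Admits next forbidden q₀ g.toWord from hg]

end RuleTree

namespace GraphTrees

variable {n : ℕ}

theorem wlen_eq_one_iff {z : FreeGroup (Fin n)} : wlen z = 1 ↔ ∃ x, z = FreeGroup.mk [x] := by
  constructor
  · intro h
    obtain ⟨x, hx⟩ := List.length_eq_one_iff.1 h
    exact ⟨x, by rw [← FreeGroup.mk_toWord (x := z), hx]⟩
  · rintro ⟨x, rfl⟩
    simp [wlen]

theorem encard_neighbours (S : Set (FreeGroup (Fin n))) (g : FreeGroup (Fin n)) :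
    ({h ∈ S | wlen (g⁻¹ * h) = 1} : Set (FreeGroup (Fin n))).encard =
      {x | g * FreeGroup.mk [x] ∈ S}.encard := by
  have hnbhd : ({h ∈ S | wlen (g⁻¹ * h) = 1} : Set (FreeGroup (Fin n))) =
      (fun x => g * FreeGroup.mk [x]) '' {x | g * FreeGroup.mk [x] ∈ S} := by
    ext h
    simp only [Set.mem_ofPred_eq, Set.mem_image, wlen_eq_one_iff, inv_mul_eq_iff_eq_mul]
    constructor
    · rintro ⟨hS, x, rfl⟩
      exact ⟨x, hS, rfl⟩
    · rintro ⟨x, hx, rfl⟩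
      exact ⟨hx, x, rfl⟩
  rw [hnbhd]
  exact ((mul_right_injective g).comp FreeGroup.mk_singleton_injective).injOn.encard_image

theorem IsPref.toWord_prefix {h g : FreeGroup (Fin n)} (hp : IsPref h g) :
    h.toWord <+: g.toWord := by
  have hsub : g.toWord.Sublist (h.toWord ++ (h⁻¹ * g).toWord) := by
    simpa using FreeGroup.toWord_mul_sublist h (h⁻¹ * g)
  have hlen : g.toWord.length = (h.toWord ++ (h⁻¹ * g).toWord).length := by
    rw [List.length_append]
    exact hp.symm
  exact (hsub.eq_of_length hlen).symm ▸ List.prefix_append _ _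

theorem mem_iff_of_ball_eq {S S' : X n} {r : ℕ} {g : FreeGroup (Fin n)}
    (h : ball S r = ball S' r) (hg : wlen g ≤ r) : g ∈ S.1 ↔ g ∈ S'.1 := by
  simpa [ball, hg] using congrArg (g ∈ ·) h

theorem exists_ball_eq_of_ne {S S' : X n} (h : S ≠ S') :
    ∃ r : ℕ, ball S r = ball S' r ∧ dist S S' = Real.exp (-r) :=
  ⟨_, Nat.sSup_mem ⟨0, zero_mem_agreeSet S S'⟩ (bddAbove_agreeSet h), tdist_eq_of_ne h⟩

section RuleTree

variable {σ : Type*} {next : σ → Fin n × Bool → σ} {forbidden : σ → Fin n × Bool} {q₀ : σ}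

theorem isTree_ruleTree (hinf : (ruleTree next forbidden q₀).Infinite) :
    IsTree (ruleTree next forbidden q₀) :=
  ⟨trivial, hinf, fun _ hg _ hp => Admits.of_prefix hg hp.toWord_prefix⟩

theorem encard_neighbours_ruleTree (hforbidden : ∀ q x, forbidden (next q x) ≠ (x.1, !x.2))
    {g : FreeGroup (Fin n)} (hg : g ∈ ruleTree next forbidden q₀) :
    ({h ∈ ruleTree next forbidden q₀ | wlen (g⁻¹ * h) = 1} : Set (FreeGroup (Fin n))).encard =
      (2 * n - 1 : ℕ) := by
  rw [encard_neighbours, setOf_mul_mem_ruleTree hforbidden hg, Set.encard_eq_coe_toFinset_card,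
    Set.toFinset_compl, Finset.card_compl]
  simp [mul_comm]

end RuleTree

/-- In `Fin 2 × Bool`, `0` is `a` and `1` is `b`, the sign being the flag. `stem k` is the vertex
`b^k`, `branch k m` the vertex `b^k a^(m+1)`, and `cone s i` any vertex beyond the comb whose last
letter is `(i, s)`. -/
inductive CodeState
  | stem (k : ℕ)
  | branch (k m : ℕ)
  | cone (s : Bool) (i : Fin 2)

namespace CodeState

def next : CodeState → Fin 2 × Bool → CodeState
  | stem k, (1, true) => stem (k + 1)
  | stem k, (0, true) => branch k 0
  | branch k m, (0, true) => branch k (m + 1)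
  | _, x => cone x.2 x.1

def forbidden (d : ℕ → Fin 2) : CodeState → Fin 2 × Bool
  | stem _ => (0, false)
  | branch k m => (1, decide (d (Nat.pair k m) = 0))
  | cone s i => (i + 1, !s)

theorem forbidden_next_ne (d : ℕ → Fin 2) (q : CodeState) (x : Fin 2 × Bool) :
    forbidden d (next q x) ≠ (x.1, !x.2) := by
  obtain ⟨i, s⟩ := x
  cases q <;> fin_cases i <;> cases s <;> simp [next, forbidden]

theorem admits_stem (d : ℕ → Fin 2) (k : ℕ) :
    Admits next (forbidden d) (stem 0) (List.replicate k (1, true)) ∧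
      (List.replicate k (1, true)).foldl next (stem 0) = stem k :=
  admits_replicate stem (fun _ => rfl) (fun _ => by simp [forbidden]) k

theorem admits_branch (d : ℕ → Fin 2) (k m : ℕ) :
    Admits next (forbidden d) (stem k) (List.replicate (m + 1) (0, true)) ∧
      (List.replicate (m + 1) (0, true)).foldl next (stem k) = branch k m :=
  admits_replicate (next := next) (forbidden := forbidden d) (x := (0, true))
    (fun | 0 => stem k | i + 1 => branch k i) (fun i => by cases i <;> rfl)
    (fun i => by cases i <;> simp [forbidden]) (m + 1)

theorem infinite_ruleTree (d : ℕ → Fin 2) : (ruleTree next (forbidden d) (stem 0)).Infinite :=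
  Set.infinite_of_injective_forall_mem
    (fun k l hkl => by simpa using congrArg FreeGroup.norm hkl)
    fun k => show Admits _ _ _ (FreeGroup.of 1 ^ k).toWord by
      rw [FreeGroup.toWord_of_pow]
      exact (admits_stem d k).1

end CodeState

open CodeState

def codeTree (d : ℕ → Fin 2) : X 2 :=
  ⟨ruleTree next (forbidden d) (stem 0), isTree_ruleTree (infinite_ruleTree d)⟩

theorem codeTree_mem_Ztri (d : ℕ → Fin 2) : codeTree d ∈ Ztri :=
  fun _ hg => encard_neighbours_ruleTree (forbidden_next_ne d) hg

def bitWord (j : ℕ) : List (Fin 2 × Bool) :=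
  List.replicate j.unpair.1 (1, true) ++ List.replicate (j.unpair.2 + 1) (0, true) ++ [(1, true)]

theorem isReduced_bitWord (j : ℕ) : FreeGroup.IsReduced (bitWord j) :=
  FreeGroup.isReduced_of_forall_snd_eq (b := true) fun x hx => by
    simp only [bitWord, List.mem_append, List.mem_replicate, List.mem_singleton] at hx
    rcases hx with (⟨-, rfl⟩ | ⟨-, rfl⟩) | rfl <;> rfl

def bitVertex (j : ℕ) : FreeGroup (Fin 2) := FreeGroup.mk (bitWord j)

theorem bitVertex_mem_codeTree (d : ℕ → Fin 2) (j : ℕ) :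
    bitVertex j ∈ (codeTree d).1 ↔ d j = 1 := by
  obtain ⟨hstem, hstem_end⟩ := admits_stem d j.unpair.1
  obtain ⟨hbranch, hbranch_end⟩ := admits_branch d j.unpair.1 j.unpair.2
  rw [codeTree, bitVertex, mem_ruleTree_mk (isReduced_bitWord j), bitWord, admits_append,
    admits_append, List.foldl_append, hstem_end, hbranch_end]
  simp only [hstem, hbranch, Admits, forbidden, Nat.pair_unpair, ne_eq, Prod.mk.injEq,
    true_eq_decide_iff, true_and, and_true]
  omega

theorem wlen_bitVertex_le {r j : ℕ} (hj : j < (r / 2) ^ 2) : wlen (bitVertex j) ≤ r := by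
  have hmax : max j.unpair.1 j.unpair.2 < r / 2 := by
    refine lt_of_pow_lt_pow_left₀ 2 (Nat.zero_le _) ?_
    calc max j.unpair.1 j.unpair.2 ^ 2
        _ ≤ max j.unpair.1 j.unpair.2 ^ 2 + min j.unpair.1 j.unpair.2 := Nat.le_add_right _ _
        _ ≤ Nat.pair j.unpair.1 j.unpair.2 := Nat.max_sq_add_min_le_pair _ _
        _ = j := Nat.pair_unpair j
        _ < (r / 2) ^ 2 := hj
  rw [wlen, bitVertex, FreeGroup.toWord_mk, (isReduced_bitWord j).reduce_eq]
  simp only [bitWord, List.length_append, List.length_replicate, List.length_singleton]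
  omega

open Classical in
def readDigits (S : X 2) : ℕ → Fin 2 := fun j => if bitVertex j ∈ S.1 then 1 else 0

theorem readDigits_codeTree (d : ℕ → Fin 2) : readDigits (codeTree d) = d := by
  ext j
  simp only [readDigits, bitVertex_mem_codeTree]
  split_ifs <;> omega

def digitValue (S : X 2) : ℝ := Real.ofDigits (readDigits S)

theorem Icc_subset_digitValue_image : Set.Icc 0 1 ⊆ digitValue '' Ztri := by
  intro y hy
  obtain ⟨d, -, rfl⟩ := Real.ofDigits_SurjOn one_lt_two hy
  exact ⟨codeTree d, codeTree_mem_Ztri d, by rw [digitValue, readDigits_codeTree]⟩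

theorem inv_two_pow_sq_le_exp (N r : ℕ) :
    ((2 : ℝ) ^ ((r / 2) ^ 2))⁻¹ ≤ Real.exp (2 * N ^ 2 + N) * Real.exp (-r) ^ N := by
  set D := r / 2
  have hr : (r : ℝ) ≤ 2 * D + 1 := by exact_mod_cast (by omega : r ≤ 2 * D + 1)
  have hlog : (1 / 2 : ℝ) < Real.log 2 := by linarith [Real.log_two_gt_d9]
  have htwo : (2 : ℝ) ^ (D ^ 2) = Real.exp ((D ^ 2 : ℕ) * Real.log 2) := by
    rw [Real.exp_nat_mul, Real.exp_log two_pos]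
  rw [htwo, ← Real.exp_neg, ← Real.exp_nat_mul, ← Real.exp_add, Real.exp_le_exp]
  push_cast
  -- `N r ≤ N (2D + 1) ≤ D²/2 + 2N² + N` by AM-GM, and `D²/2 < D² log 2`
  nlinarith [sq_nonneg ((D : ℝ) - 2 * N), (Nat.cast_nonneg N : (0 : ℝ) ≤ N),
    sq_nonneg (D : ℝ)]

theorem exists_holderWith_digitValue (N : ℕ) : ∃ C, HolderWith C N digitValue := by
  refine ⟨(Real.exp (2 * N ^ 2 + N)).toNNReal, HolderWith.of_dist_le fun S S' => ?_⟩
  rw [Real.coe_toNNReal _ (Real.exp_pos _).le, NNReal.coe_natCast, Real.rpow_natCast]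
  rcases eq_or_ne S S' with rfl | hne
  · rw [dist_self, dist_self]
    positivity
  obtain ⟨r, hball, hdist⟩ := exists_ball_eq_of_ne hne
  have hdigits : ∀ j < (r / 2) ^ 2, readDigits S j = readDigits S' j := fun j hj => by
    classical
    exact if_congr (mem_iff_of_ball_eq hball (wlen_bitVertex_le hj)) rfl rfl
  calc dist (digitValue S) (digitValue S') ≤ ((2 : ℝ) ^ ((r / 2) ^ 2))⁻¹ := by
        simpa [digitValue, Real.dist_eq] using Real.abs_ofDigits_sub_ofDigits_le hdigits
    _ ≤ _ := hdist ▸ inv_two_pow_sq_le_exp N r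

/-- The set of trivalent trees in `(X_2, d_2)` has infinite Hausdorff dimension. -/
theorem dimH_trivalent_eq_top : dimH Ztri = ⊤ :=
  dimH_eq_top_of_forall_holderOnWith
    (fun N => (exists_holderWith_digitValue N).imp fun _ h => h.holderOnWith Ztri)
    Icc_subset_digitValue_image
    (by simp [Real.dimH_of_nonempty_interior, interior_Icc])

end GraphTrees
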